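/- arXiv:2502.19939 — 2 statements merged into one kernel-verified Lean document; each statement's English description precedes it below -/
import Mathlib

section
/- Let Φ be a holomorphic map on the half-plane Re(s) > 0 such that Φ(ℂ₀) ⊂ ℂ_ε for some ε > 1/2, where ℂ_θ = {s : Re(s) > θ}, and suppose Φ induces the operator D_Φ f = f' ∘ Φ on ℋ². Then D_Φ is Hilbert–Schmidt on ℋ²; in particular ∑_{n=1}^∞ ‖D_Φ(n^{-s})‖²_{ℋ²} ≤ ∑_{n=1}^∞ (log n)²/n^{2ε} < ∞. -/
open MeasureTheory intervalIntegral Complex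
open scoped ENNReal NNReal

noncomputable def Ee (m : ℕ+) (t : ℝ) : ℂ :=
  Complex.exp (-((Real.log m : ℂ) * (t : ℂ)) * Complex.I)

lemma Ee_continuous (m : ℕ+) : Continuous (fun t => Ee m t) := by
  unfold Ee; fun_prop

lemma norm_Ee (m : ℕ+) (t : ℝ) : ‖Ee m t‖ = 1 := by
  unfold Ee
  rw [show -((Real.log m : ℂ) * (t:ℂ)) * Complex.I = ((-(Real.log m * t) : ℝ) : ℂ) * Complex.I by simp [Complex.ofReal_neg, Complex.ofReal_mul]]
  rw [Complex.norm_exp, Complex.mul_I_re]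
  simp only [Complex.ofReal_im, neg_zero, Real.exp_zero]

lemma Ee_mul_conj (m k : ℕ+) (t : ℝ) :
    Ee m t * (starRingEnd ℂ) (Ee k t) =
      Complex.exp ((((Real.log k - Real.log m : ℝ) : ℂ) * Complex.I) * (t : ℂ)) := by
  unfold Ee
  rw [← Complex.exp_conj, ← Complex.exp_add]
  congr 1
  simp only [map_mul, map_neg, Complex.conj_I, Complex.conj_ofReal, Complex.ofReal_sub]
  ring

lemma int_exp_eq (θ : ℝ) (hθ : θ ≠ 0) (T : ℝ) :
    (∫ t in (0:ℝ)..T, Complex.exp (((θ : ℂ) * Complex.I) * (t : ℂ))) =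
      (Complex.exp ((θ : ℂ) * Complex.I * T) - 1) / ((θ : ℂ) * Complex.I) := by
  rw [integral_exp_mul_complex (by simp [hθ, Complex.I_ne_zero])]
  simp

lemma int_exp_bound (θ : ℝ) (hθ : θ ≠ 0) (T : ℝ) :
    ‖∫ t in (0:ℝ)..T, Complex.exp (((θ : ℂ) * Complex.I) * (t : ℂ))‖ ≤ 2 / |θ| := by
  rw [int_exp_eq θ hθ T, norm_div]
  have h1 : ‖Complex.exp ((θ:ℂ) * Complex.I * T) - 1‖ ≤ 2 := by
    calc ‖Complex.exp ((θ:ℂ) * Complex.I * T) - 1‖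
        ≤ ‖Complex.exp ((θ:ℂ) * Complex.I * T)‖ + ‖(1:ℂ)‖ := norm_sub_le _ _
      _ ≤ 2 := by
          rw [Complex.norm_exp]
          simp only [norm_one]
          norm_num [Complex.mul_re]
  have h2 : ‖(θ:ℂ) * Complex.I‖ = |θ| := by
    simp
  rw [h2]
  gcongr

lemma int_exp_zero (T : ℝ) :
    (∫ t in (0:ℝ)..T, Complex.exp ((((0:ℝ) : ℂ) * Complex.I) * (t : ℂ))) = (T : ℂ) := by
  simp

lemma gap_pos (k : ℕ+) : 0 < Real.log ((k:ℝ) + 1) - Real.log k := by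
  have h1 : (0:ℝ) < k := by exact_mod_cast k.pos
  have := Real.log_lt_log h1 (by linarith : (k:ℝ) < k + 1)
  linarith

lemma gap_le (k m : ℕ+) (hmk : m ≠ k) :
    Real.log ((k:ℝ) + 1) - Real.log k ≤ |Real.log k - Real.log m| := by
  have hk1 : (1:ℝ) ≤ k := by exact_mod_cast k.one_le
  have hm1 : (1:ℝ) ≤ m := by exact_mod_cast m.one_le
  rcases lt_or_gt_of_ne hmk with h | h
  · have h' : (m:ℕ) < (k:ℕ) := by exact_mod_cast h
    have hmk1 : (m:ℝ) ≤ (k:ℝ) - 1 := by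
      have : (m:ℕ) + 1 ≤ (k:ℕ) := by omega
      have : (m:ℝ) + 1 ≤ (k:ℝ) := by exact_mod_cast this
      linarith
    have hk2 : (2:ℝ) ≤ (k:ℝ) := by linarith
    have hlm : Real.log m ≤ Real.log ((k:ℝ) - 1) := Real.log_le_log (by linarith) hmk1
    have hmul : Real.log (((k:ℝ)+1) * ((k:ℝ)-1)) ≤ Real.log ((k:ℝ) * k) :=
      Real.log_le_log (by nlinarith) (by nlinarith)
    rw [Real.log_mul (by linarith) (by linarith), Real.log_mul (by linarith) (by linarith)]
      at hmul
    have hlkm : Real.log m ≤ Real.log k := Real.log_le_log (by linarith) (by linarith)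
    rw [_root_.abs_of_nonneg (by linarith)]
    linarith
  · have h' : (k:ℕ) < (m:ℕ) := by exact_mod_cast h
    have hm : (k:ℝ) + 1 ≤ m := by
      have : (k:ℕ) + 1 ≤ (m:ℕ) := by omega
      exact_mod_cast this
    have h2 : Real.log ((k:ℝ)+1) ≤ Real.log m := Real.log_le_log (by linarith) hm
    have hlkm : Real.log k ≤ Real.log m := Real.log_le_log (by linarith) (by linarith)
    rw [abs_sub_comm, _root_.abs_of_nonneg (by linarith)]
    linarith

lemma norm_Ee_mul_conj (m k : ℕ+) (t : ℝ) :
    ‖Ee m t * (starRingEnd ℂ) (Ee k t)‖ = 1 := by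
  rw [norm_mul, norm_Ee, starRingEnd_apply, norm_star, norm_Ee, mul_one]

lemma tsumSwapIntegral (a : ℕ+ → ℂ) (ha : Summable fun m => ‖a m‖) (k : ℕ+) {T : ℝ}
    (hT : 0 ≤ T) :
    (∫ t in (0:ℝ)..T, (∑' m : ℕ+, a m * Ee m t) * (starRingEnd ℂ) (Ee k t)) =
      ∑' m : ℕ+, a m * ∫ t in (0:ℝ)..T, Ee m t * (starRingEnd ℂ) (Ee k t) := by
  have h1 : ∀ t : ℝ, (∑' m : ℕ+, a m * Ee m t) * (starRingEnd ℂ) (Ee k t) =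
      ∑' m : ℕ+, a m * (Ee m t * (starRingEnd ℂ) (Ee k t)) := by
    intro t
    rw [← tsum_mul_right]
    simp_rw [mul_assoc]
  simp_rw [h1]
  have hcont : ∀ m : ℕ+, Continuous (fun t : ℝ => a m * (Ee m t * (starRingEnd ℂ) (Ee k t))) := by
    intro m
    exact continuous_const.mul ((Ee_continuous m).mul (Complex.continuous_conj.comp
      (Ee_continuous k)))
  rw [intervalIntegral.integral_of_le hT]
  simp_rw [intervalIntegral.integral_of_le hT]
  rw [MeasureTheory.integral_tsum (fun m => (hcont m).aestronglyMeasurable)]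
  · exact tsum_congr fun m => MeasureTheory.integral_const_mul _ _
  · have heq : ∀ m : ℕ+, ∫⁻ t in Set.Ioc (0:ℝ) T,
        ‖a m * (Ee m t * (starRingEnd ℂ) (Ee k t))‖₊ = ‖a m‖₊ * ENNReal.ofReal T := by
      intro m
      have : ∀ t : ℝ, (‖a m * (Ee m t * (starRingEnd ℂ) (Ee k t))‖₊ : ℝ≥0∞) = ‖a m‖₊ := by
        intro t
        norm_cast
        ext
        push_cast
        rw [norm_mul, norm_Ee_mul_conj, mul_one]
      simp_rw [this]
      rw [MeasureTheory.setLIntegral_const, Real.volume_Ioc, sub_zero]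
    simp_rw [enorm_eq_nnnorm, heq]
    rw [ENNReal.tsum_mul_right]
    apply ENNReal.mul_ne_top
    · rw [ENNReal.tsum_coe_ne_top_iff_summable]
      exact NNReal.summable_coe.mp (by simpa [coe_nnnorm] using ha)
    · exact ENNReal.ofReal_ne_top

lemma J_est (a : ℕ+ → ℂ) (ha : Summable fun m => ‖a m‖) (k : ℕ+) {T : ℝ} (hT : 0 < T) :
    ‖(∫ t in (0:ℝ)..T, (∑' m : ℕ+, a m * Ee m t) * (starRingEnd ℂ) (Ee k t)) -
        a k * (T:ℂ)‖
      ≤ (2 / (Real.log ((k:ℝ)+1) - Real.log k)) * ∑' m : ℕ+, ‖a m‖ := by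
  set c := Real.log ((k:ℝ)+1) - Real.log k with hc_def
  have hc : 0 < c := gap_pos k
  set I : ℕ+ → ℂ := fun m => ∫ t in (0:ℝ)..T, Ee m t * (starRingEnd ℂ) (Ee k t) with hI_def
  have Ik : I k = (T:ℂ) := by
    rw [hI_def]
    simp only [Ee_mul_conj, sub_self, Complex.ofReal_zero, zero_mul, Complex.exp_zero]
    simp
  have Ibound : ∀ m : ℕ+, m ≠ k → ‖I m‖ ≤ 2 / c := by
    intro m hm
    have hθ : Real.log (k:ℝ) - Real.log (m:ℝ) ≠ 0 := by
      intro h0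
      have := gap_le k m hm
      rw [h0] at this
      simp at this
      linarith
    have h1 : ‖I m‖ ≤ 2 / |Real.log (k:ℝ) - Real.log (m:ℝ)| := by
      rw [hI_def]
      simp only [Ee_mul_conj]
      exact int_exp_bound _ hθ T
    refine h1.trans (div_le_div_of_nonneg_left (by norm_num) hc (gap_le k m hm))
  have Inorm : ∀ m : ℕ+, ‖I m‖ ≤ max T (2/c) := by
    intro m
    by_cases hm : m = k
    · rw [hm, Ik]
      simpa [abs_of_pos hT] using le_max_left T (2/c)
    · exact (Ibound m hm).trans (le_max_right _ _)
  have hsum : Summable (fun m : ℕ+ => a m * I m) := by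
    apply Summable.of_norm_bounded (g := fun m => ‖a m‖ * max T (2/c)) (ha.mul_right _)
    intro m
    rw [norm_mul]
    exact mul_le_mul_of_nonneg_left (Inorm m) (norm_nonneg _)
  rw [tsumSwapIntegral a ha k hT.le, hsum.tsum_eq_add_tsum_ite k]
  rw [show a k * I k + (∑' m : ℕ+, if m = k then 0 else a m * I m) - a k * (T:ℂ) =
      ∑' m : ℕ+, if m = k then 0 else a m * I m by rw [Ik]; ring]
  have hbd : ∀ m : ℕ+, ‖if m = k then (0:ℂ) else a m * I m‖ ≤ (2/c) * ‖a m‖ := by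
    intro m
    by_cases hm : m = k
    · simp [hm]
      positivity
    · simp only [hm, if_false, norm_mul]
      rw [mul_comm (2/c) ‖a m‖]
      exact mul_le_mul_of_nonneg_left (Ibound m hm) (norm_nonneg (a m))
  calc ‖∑' m : ℕ+, if m = k then (0:ℂ) else a m * I m‖
      ≤ (2/c) * ∑' m : ℕ+, ‖a m‖ := tsum_of_norm_bounded (ha.hasSum.mul_left (2/c)) hbd
    _ = _ := rfl

lemma bessel (a : ℕ+ → ℂ) (ha : Summable fun m => ‖a m‖) (L : ℝ) (hL : 0 ≤ L)
    (hbd : ∀ t : ℝ, ‖∑' m : ℕ+, a m * Ee m t‖ ≤ L)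
    (F : Finset ℕ+) : ∑ m ∈ F, ‖a m‖ ^ 2 ≤ L ^ 2 := by
  classical
  set A : ℝ := ∑' m : ℕ+, ‖a m‖ with hA_def
  have hA0 : 0 ≤ A := tsum_nonneg (fun m => norm_nonneg _)
  set S : ℝ := ∑ m ∈ F, ‖a m‖ ^ 2 with hS_def
  set a' : ℕ+ → ℂ := fun m => if m ∈ F then a m else 0 with ha'_def
  have ha'le : ∀ m : ℕ+, ‖a' m‖ ≤ ‖a m‖ := by
    intro m
    by_cases hm : m ∈ F <;> simp [ha'_def, hm]
  have ha' : Summable fun m : ℕ+ => ‖a' m‖ :=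
    ha.of_nonneg_of_le (fun m => norm_nonneg _) ha'le
  have hA' : (∑' m : ℕ+, ‖a' m‖) ≤ A := Summable.tsum_le_tsum ha'le ha' ha
  have hA'0 : 0 ≤ ∑' m : ℕ+, ‖a' m‖ := tsum_nonneg (fun m => norm_nonneg _)
  set Fn : ℝ → ℂ := fun t => ∑' m : ℕ+, a m * Ee m t with hFn_def
  set P : ℝ → ℂ := fun t => ∑' m : ℕ+, a' m * Ee m t with hP_def
  have hPsum : ∀ t : ℝ, P t = ∑ k ∈ F, a k * Ee k t := by
    intro t
    have hP_t : P t = ∑' m : ℕ+, a' m * Ee m t := rfl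
    rw [hP_t]
    rw [tsum_eq_sum (s := F) (by
      intro m hm
      simp [ha'_def, hm])]
    exact Finset.sum_congr rfl (fun k hk => by simp [ha'_def, hk])
  have hFc : Continuous Fn :=
    continuous_tsum (fun m => continuous_const.mul (Ee_continuous m)) ha
      (fun m t => by rw [norm_mul, norm_Ee, mul_one])
  have hPc : Continuous P :=
    continuous_tsum (fun m => continuous_const.mul (Ee_continuous m)) ha'
      (fun m t => by rw [norm_mul, norm_Ee, mul_one])
  set D : ℝ := ∑ k ∈ F, ‖a k‖ * ((2 / (Real.log ((k:ℝ)+1) - Real.log k)) * A) with hD_def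
  have hD0 : 0 ≤ D := by
    apply Finset.sum_nonneg
    intro k _
    have := gap_pos k
    positivity
  -- main estimate for every T > 0
  have main : ∀ T : ℝ, 0 < T → S * T ≤ L ^ 2 * T + 3 * D := by
    intro T hT
    set J : ℕ+ → ℂ := fun k => ∫ t in (0:ℝ)..T, Fn t * (starRingEnd ℂ) (Ee k t) with hJ_def
    set J' : ℕ+ → ℂ := fun k => ∫ t in (0:ℝ)..T, P t * (starRingEnd ℂ) (Ee k t) with hJ'_def
    have hJest : ∀ k : ℕ+, ‖J k - a k * (T:ℂ)‖ ≤
        (2 / (Real.log ((k:ℝ)+1) - Real.log k)) * A := J_est a ha (T := T) (hT := hT)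
    have hJ'est : ∀ k : ℕ+, k ∈ F → ‖J' k - a k * (T:ℂ)‖ ≤
        (2 / (Real.log ((k:ℝ)+1) - Real.log k)) * A := by
      intro k hk
      have h1 := J_est a' ha' k (T := T) hT
      rw [show a' k = a k by simp [ha'_def, hk]] at h1
      refine h1.trans ?_
      have := gap_pos k
      have h2 : 0 ≤ 2 / (Real.log ((k:ℝ)+1) - Real.log k) := by positivity
      exact mul_le_mul_of_nonneg_left hA' h2
    -- expand the two integrals as finite sums
    have hconjP : ∀ t : ℝ, (starRingEnd ℂ) (P t) =
        ∑ k ∈ F, (starRingEnd ℂ) (a k) * (starRingEnd ℂ) (Ee k t) := by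
      intro t
      rw [hPsum t, map_sum]
      exact Finset.sum_congr rfl (fun k _ => by rw [map_mul])
    have hFP : (∫ t in (0:ℝ)..T, Fn t * (starRingEnd ℂ) (P t)) =
        ∑ k ∈ F, (starRingEnd ℂ) (a k) * J k := by
      have h1 : ∀ t : ℝ, Fn t * (starRingEnd ℂ) (P t) =
          ∑ k ∈ F, (starRingEnd ℂ) (a k) * (Fn t * (starRingEnd ℂ) (Ee k t)) := by
        intro t
        rw [hconjP t, Finset.mul_sum]
        exact Finset.sum_congr rfl (fun k _ => by ring)
      simp_rw [h1]
      rw [intervalIntegral.integral_finset_sum]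
      · exact Finset.sum_congr rfl (fun k _ => intervalIntegral.integral_const_mul _ _)
      · intro k _
        exact (continuous_const.mul (hFc.mul (Complex.continuous_conj.comp
          (Ee_continuous k)))).intervalIntegrable _ _
    have hPP : (∫ t in (0:ℝ)..T, P t * (starRingEnd ℂ) (P t)) =
        ∑ k ∈ F, (starRingEnd ℂ) (a k) * J' k := by
      have h1 : ∀ t : ℝ, P t * (starRingEnd ℂ) (P t) =
          ∑ k ∈ F, (starRingEnd ℂ) (a k) * (P t * (starRingEnd ℂ) (Ee k t)) := by
        intro t
        rw [hconjP t, Finset.mul_sum]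
        exact Finset.sum_congr rfl (fun k _ => by ring)
      simp_rw [h1]
      rw [intervalIntegral.integral_finset_sum]
      · exact Finset.sum_congr rfl (fun k _ => intervalIntegral.integral_const_mul _ _)
      · intro k _
        exact (continuous_const.mul (hPc.mul (Complex.continuous_conj.comp
          (Ee_continuous k)))).intervalIntegrable _ _
    set X : ℂ := ∫ t in (0:ℝ)..T, Fn t * (starRingEnd ℂ) (P t) with hX_def
    set Y : ℂ := ∫ t in (0:ℝ)..T, P t * (starRingEnd ℂ) (P t) with hY_def
    -- norm of squares identity
    have hn : ∀ z : ℂ, ‖z‖ ^ 2 = Complex.normSq z := fun z => by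
      rw [Complex.sq_norm]
    -- pointwise inequality
    have hpt : ∀ t : ℝ, 2 * (Fn t * (starRingEnd ℂ) (P t)).re - ‖P t‖ ^ 2 ≤ L ^ 2 := by
      intro t
      have h0 : (0:ℝ) ≤ ‖Fn t - P t‖ ^ 2 := sq_nonneg _
      rw [hn, Complex.normSq_sub] at h0
      have hF2 : Complex.normSq (Fn t) ≤ L ^ 2 := by
        rw [← hn]
        have := hbd t
        nlinarith [norm_nonneg (Fn t)]
      rw [hn]
      linarith
    -- integrate
    have hcont1 : Continuous (fun t : ℝ => Fn t * (starRingEnd ℂ) (P t)) :=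
      hFc.mul (Complex.continuous_conj.comp hPc)
    have hcont2 : Continuous (fun t : ℝ => P t * (starRingEnd ℂ) (P t)) :=
      hPc.mul (Complex.continuous_conj.comp hPc)
    have hc3 : Continuous (fun t : ℝ => (Fn t * (starRingEnd ℂ) (P t)).re) :=
      Complex.continuous_re.comp hcont1
    have hc4 : Continuous (fun t : ℝ => ‖P t‖ ^ 2) := (hPc.norm).pow 2
    have hc5 : Continuous (fun t : ℝ => 2 * (Fn t * (starRingEnd ℂ) (P t)).re) :=
      continuous_const.mul hc3
    have hcontL : Continuous (fun t : ℝ =>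
        2 * (Fn t * (starRingEnd ℂ) (P t)).re - ‖P t‖ ^ 2) := hc5.sub hc4
    have hint : (∫ t in (0:ℝ)..T, (2 * (Fn t * (starRingEnd ℂ) (P t)).re - ‖P t‖ ^ 2))
        ≤ ∫ t in (0:ℝ)..T, (L^2 : ℝ) := by
      apply intervalIntegral.integral_mono_on hT.le
        (hcontL.intervalIntegrable _ _) (intervalIntegrable_const)
      intro t _
      exact hpt t
    have hRHS : (∫ t in (0:ℝ)..T, (L^2 : ℝ)) = L ^ 2 * T := by
      simp [mul_comm]
    -- split LHS
    have hre1 : (∫ t in (0:ℝ)..T, (Fn t * (starRingEnd ℂ) (P t)).re) = X.re := by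
      rw [hX_def, intervalIntegral.integral_of_le hT.le,
        intervalIntegral.integral_of_le hT.le]
      rw [← RCLike.re_to_complex]
      rw [← integral_re (hcont1.integrableOn_Ioc)]
      rfl
    have hre2 : (∫ t in (0:ℝ)..T, ‖P t‖ ^ 2) = Y.re := by
      have hpt2 : ∀ t : ℝ, P t * (starRingEnd ℂ) (P t) = ((‖P t‖ ^ 2 : ℝ) : ℂ) := by
        intro t
        rw [Complex.mul_conj, hn]
      rw [hY_def]
      simp_rw [hpt2]
      rw [intervalIntegral.integral_ofReal]
      simp
    have hsplit : (∫ t in (0:ℝ)..T, (2 * (Fn t * (starRingEnd ℂ) (P t)).re - ‖P t‖ ^ 2))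
        = 2 * X.re - Y.re := by
      rw [intervalIntegral.integral_sub (hc5.intervalIntegrable _ _)
        (hc4.intervalIntegrable _ _),
        intervalIntegral.integral_const_mul, hre1, hre2]
    -- estimates on X and Y
    have hsum_eq : ((S:ℝ):ℂ) * (T:ℂ) = ∑ k ∈ F, (starRingEnd ℂ) (a k) * (a k * (T:ℂ)) := by
      rw [hS_def]
      push_cast
      rw [Finset.sum_mul]
      refine Finset.sum_congr rfl (fun k _ => ?_)
      rw [← mul_assoc, mul_comm ((starRingEnd ℂ) (a k)) (a k), Complex.mul_conj]
      rw [← Complex.ofReal_pow, hn]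
    have hXe : ‖X - ((S:ℝ):ℂ) * T‖ ≤ D := by
      rw [hFP, hsum_eq, ← Finset.sum_sub_distrib]
      refine (norm_sum_le _ _).trans ?_
      rw [hD_def]
      refine Finset.sum_le_sum (fun k hk => ?_)
      rw [show (starRingEnd ℂ) (a k) * J k - (starRingEnd ℂ) (a k) * (a k * (T:ℂ)) =
        (starRingEnd ℂ) (a k) * (J k - a k * (T:ℂ)) by ring]
      rw [norm_mul, starRingEnd_apply, norm_star]
      exact mul_le_mul_of_nonneg_left (hJest k) (norm_nonneg _)
    have hYe : ‖Y - ((S:ℝ):ℂ) * T‖ ≤ D := by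
      rw [hPP, hsum_eq, ← Finset.sum_sub_distrib]
      refine (norm_sum_le _ _).trans ?_
      rw [hD_def]
      refine Finset.sum_le_sum (fun k hk => ?_)
      rw [show (starRingEnd ℂ) (a k) * J' k - (starRingEnd ℂ) (a k) * (a k * (T:ℂ)) =
        (starRingEnd ℂ) (a k) * (J' k - a k * (T:ℂ)) by ring]
      rw [norm_mul, starRingEnd_apply, norm_star]
      exact mul_le_mul_of_nonneg_left (hJ'est k hk) (norm_nonneg _)
    have hXre : S * T - D ≤ X.re := by
      have h1 : |(X - ((S:ℝ):ℂ) * T).re| ≤ D :=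
        (Complex.abs_re_le_norm _).trans hXe
      have h2 : (X - ((S:ℝ):ℂ) * T).re = X.re - S * T := by
        simp [Complex.sub_re, Complex.mul_re]
      rw [h2, abs_le] at h1
      linarith [h1.1]
    have hYre : Y.re ≤ S * T + D := by
      have h1 : |(Y - ((S:ℝ):ℂ) * T).re| ≤ D :=
        (Complex.abs_re_le_norm _).trans hYe
      have h2 : (Y - ((S:ℝ):ℂ) * T).re = Y.re - S * T := by
        simp [Complex.sub_re, Complex.mul_re]
      rw [h2, abs_le] at h1
      linarith [h1.2]
    rw [hsplit, hRHS] at hint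
    linarith
  -- conclude S ≤ L^2
  by_contra hcon
  push_neg at hcon
  set u : ℝ := S - L ^ 2 with hu_def
  have hu : 0 < u := by rw [hu_def]; linarith
  set T : ℝ := 3 * D / u + 1 with hT_def
  have hT : 0 < T := by
    have : 0 ≤ 3 * D / u := by positivity
    rw [hT_def]; linarith
  have h1 := main T hT
  have h2 : u * T = 3 * D + u := by
    rw [hT_def, mul_add, mul_one, mul_div_cancel₀ _ (ne_of_gt hu)]
  nlinarith

lemma pnat_cast_ne_zero (m : ℕ+) : (m:ℂ) ≠ 0 := by
  exact_mod_cast (Nat.cast_ne_zero (R := ℂ)).mpr m.pos.ne'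

lemma cpow_split (m : ℕ+) (σ t : ℝ) :
    (m:ℂ) ^ (-((σ:ℂ) + (t:ℂ) * Complex.I)) = (m:ℂ) ^ (-(σ:ℂ)) * Ee m t := by
  have hm0 : (m:ℂ) ≠ 0 := pnat_cast_ne_zero m
  have hlog : Complex.log ((m:ℕ):ℂ) = ((Real.log (m:ℕ) : ℝ) : ℂ) := by
    rw [← Complex.ofReal_natCast, Complex.ofReal_log (Nat.cast_nonneg _)]
  rw [Complex.cpow_def_of_ne_zero hm0, Complex.cpow_def_of_ne_zero hm0]
  unfold Ee
  rw [← Complex.exp_add]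
  congr 1
  rw [hlog]
  ring

lemma norm_cpow_pnat (m : ℕ+) (w : ℂ) : ‖(m:ℂ) ^ w‖ = (m:ℝ) ^ w.re := by
  have hm : (0:ℝ) < (m:ℕ) := by exact_mod_cast m.pos
  have hcast : ((m:ℕ):ℂ) = ((((m:ℕ):ℝ)):ℂ) := by norm_cast
  rw [hcast, Complex.norm_cpow_eq_rpow_re_of_pos hm]

lemma sigma_bound (ε : ℝ) (Φ : ℂ → ℂ) (hΦ : ∀ s : ℂ, 0 < s.re → ε < (Φ s).re)
    (n : ℕ+) (bn : ℕ+ → ℂ)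
    (hb : ∀ s : ℂ, 0 < s.re →
      -((Real.log n : ℂ) * (n : ℂ) ^ (-(Φ s))) = ∑' m : ℕ+, bn m * (m : ℂ) ^ (-s))
    (σ : ℝ) (hσ : 0 < σ)
    (hsum : Summable fun m : ℕ+ => ‖bn m * (m:ℂ) ^ (-(σ:ℂ))‖) (Fset : Finset ℕ+) :
    ∑ m ∈ Fset, ‖bn m‖ ^ 2 * ((m:ℝ) ^ (-σ)) ^ 2 ≤ (Real.log n * (n:ℝ) ^ (-ε)) ^ 2 := by
  set L : ℝ := Real.log n * (n:ℝ) ^ (-ε) with hL_def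
  have hn1 : (1:ℝ) ≤ (n:ℝ) := by exact_mod_cast n.one_le
  have hlogn : 0 ≤ Real.log n := Real.log_nonneg hn1
  have hL0 : 0 ≤ L := by
    have : (0:ℝ) < (n:ℝ) ^ (-ε) := Real.rpow_pos_of_pos (by linarith) _
    positivity
  set a : ℕ+ → ℂ := fun m => bn m * (m:ℂ) ^ (-(σ:ℂ)) with ha_def
  have hbd : ∀ t : ℝ, ‖∑' m : ℕ+, a m * Ee m t‖ ≤ L := by
    intro t
    set s : ℂ := (σ:ℂ) + (t:ℂ) * Complex.I with hs_def
    have hsre : 0 < s.re := by simp [hs_def, hσ]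
    have heq : ∀ m : ℕ+, a m * Ee m t = bn m * (m:ℂ) ^ (-s) := by
      intro m
      rw [ha_def]
      rw [mul_assoc, ← cpow_split m σ t]
    rw [tsum_congr heq, ← hb s hsre]
    rw [norm_neg, norm_mul]
    have h1 : ‖((Real.log n : ℝ):ℂ)‖ = Real.log n := by
      rw [Complex.norm_real, Real.norm_eq_abs, _root_.abs_of_nonneg hlogn]
    have h2 : ‖(n:ℂ) ^ (-(Φ s))‖ ≤ (n:ℝ) ^ (-ε) := by
      rw [norm_cpow_pnat]
      apply Real.rpow_le_rpow_of_exponent_le hn1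
      have := hΦ s hsre
      simp only [Complex.neg_re]
      linarith
    calc ‖((Real.log n : ℝ):ℂ)‖ * ‖(n:ℂ) ^ (-(Φ s))‖
        ≤ Real.log n * (n:ℝ) ^ (-ε) := by
          rw [h1]
          exact mul_le_mul_of_nonneg_left h2 hlogn
      _ = L := rfl
  have hres := bessel a hsum L hL0 hbd Fset
  refine le_trans (le_of_eq ?_) hres
  refine Finset.sum_congr rfl (fun m _ => ?_)
  rw [ha_def]
  rw [norm_mul, mul_pow, norm_cpow_pnat]
  simp

lemma pnat_rpow_summable {p : ℝ} (hp : 1 < p) :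
    Summable (fun m : ℕ+ => ((m:ℝ) ^ p)⁻¹) := by
  have h1 : Summable (fun n : ℕ => ((n:ℝ) ^ p)⁻¹) := Real.summable_nat_rpow_inv.mpr hp
  have h2 := h1.comp_injective (PNat.coe_injective)
  exact h2

lemma key_summable (ε : ℝ) (hε : 1 / 2 < ε) :
    Summable (fun n : ℕ+ => (Real.log n) ^ 2 / (n : ℝ) ^ (2 * ε)) := by
  set q : ℝ := (1 + 2 * ε) / 2 with hq_def
  set η : ℝ := (2 * ε - q) / 2 with hη_def
  have hq : 1 < q := by rw [hq_def]; linarith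
  have hη : 0 < η := by rw [hη_def, hq_def]; linarith
  have hbase := (pnat_rpow_summable hq).mul_left (1 / η ^ 2)
  apply Summable.of_nonneg_of_le (fun n => by positivity) _ hbase
  intro n
  have hn0 : (0:ℝ) < (n:ℝ) := by exact_mod_cast n.pos
  have hn1 : (1:ℝ) ≤ (n:ℝ) := by exact_mod_cast n.one_le
  have hlog : Real.log n ≤ (n:ℝ) ^ η / η := Real.log_le_rpow_div hn0.le hη
  have hlog0 : 0 ≤ Real.log n := Real.log_nonneg hn1
  have h1 : (Real.log n) ^ 2 ≤ ((n:ℝ) ^ η / η) ^ 2 := by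
    apply pow_le_pow_left₀ hlog0 hlog
  have e1 : ((n:ℝ) ^ η) ^ 2 = (n:ℝ) ^ (2 * η) := by
    rw [← Real.rpow_natCast ((n:ℝ) ^ η) 2, ← Real.rpow_mul hn0.le]
    norm_num [mul_comm]
  have e2 : (n:ℝ) ^ (2 * ε) = (n:ℝ) ^ q * (n:ℝ) ^ (2 * η) := by
    rw [← Real.rpow_add hn0]
    congr 1
    rw [hη_def]
    ring
  calc (Real.log n) ^ 2 / (n:ℝ) ^ (2 * ε)
      ≤ ((n:ℝ) ^ η / η) ^ 2 / (n:ℝ) ^ (2 * ε) := by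
        have hc : (0:ℝ) < (n:ℝ) ^ (2*ε) := Real.rpow_pos_of_pos hn0 _
        gcongr
    _ = 1 / η ^ 2 * ((n:ℝ) ^ q)⁻¹ := by
        rw [div_pow, e1, e2]
        have hq0 : (0:ℝ) < (n:ℝ) ^ q := Real.rpow_pos_of_pos hn0 _
        have h2η : (0:ℝ) < (n:ℝ) ^ (2 * η) := Real.rpow_pos_of_pos hn0 _
        field_simp

set_option maxHeartbeats 1000000 in
lemma key_bound (ε : ℝ) (hε : 1 / 2 < ε) (Φ : ℂ → ℂ)
    (hΦ : ∀ s : ℂ, 0 < s.re → ε < (Φ s).re)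
    (n : ℕ+) (bn : ℕ+ → ℂ)
    (hb : ∀ s : ℂ, 0 < s.re →
      -((Real.log n : ℂ) * (n : ℂ) ^ (-(Φ s))) = ∑' m : ℕ+, bn m * (m : ℂ) ^ (-s))
    (hb2 : Summable (fun m : ℕ+ => ‖bn m‖ ^ 2)) :
    ∑' m : ℕ+, ‖bn m‖ ^ 2 ≤ (Real.log n) ^ 2 / (n : ℝ) ^ (2 * ε) := by
  have hn0 : (0:ℝ) < (n:ℝ) := by exact_mod_cast n.pos
  have hn1 : (1:ℝ) ≤ (n:ℝ) := by exact_mod_cast n.one_le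
  have hRHS : (Real.log n) ^ 2 / (n : ℝ) ^ (2 * ε) = (Real.log n * (n:ℝ) ^ (-ε)) ^ 2 := by
    rw [mul_pow, ← Real.rpow_natCast ((n:ℝ) ^ (-ε)) 2, ← Real.rpow_mul hn0.le,
      div_eq_mul_inv, ← Real.rpow_neg hn0.le]
    norm_num
    left
    ring
  rw [hRHS]
  have hfin : ∀ Fset : Finset ℕ+,
      ∑ m ∈ Fset, ‖bn m‖ ^ 2 ≤ (Real.log n * (n:ℝ) ^ (-ε)) ^ 2 := by
    intro Fset
    by_cases hn : Real.log (n:ℝ) = 0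
    · -- the trivial case: the function is identically zero
      have hsum1 : Summable fun m : ℕ+ => ‖bn m * (m:ℂ) ^ (-((1:ℝ):ℂ))‖ := by
        have hbig : Summable (fun m : ℕ+ => (‖bn m‖ ^ 2 + ((m:ℝ) ^ (2:ℝ))⁻¹) / 2) :=
          (hb2.add (pnat_rpow_summable (by norm_num : (1:ℝ) < 2))).div_const 2
        refine hbig.of_nonneg_of_le (fun m => norm_nonneg _) ?_
        intro m
        have hm0 : (0:ℝ) < (m:ℝ) := by exact_mod_cast m.pos
        rw [norm_mul, norm_cpow_pnat]
        set x : ℝ := (m:ℝ) ^ ((-((1:ℝ):ℂ)).re) with hx_def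
        have hx2 : x ^ 2 = ((m:ℝ) ^ (2:ℝ))⁻¹ := by
          rw [hx_def]
          simp only [Complex.neg_re, Complex.ofReal_re]
          rw [← Real.rpow_natCast ((m:ℝ) ^ (-(1:ℝ))) 2, ← Real.rpow_mul hm0.le,
            ← Real.rpow_neg hm0.le]
          norm_num
        nlinarith [sq_nonneg (‖bn m‖ - x)]
      have h := sigma_bound ε Φ hΦ n bn hb 1 one_pos hsum1 Fset
      rw [hn, zero_mul] at h
      rw [show ((0:ℝ)) ^ 2 = 0 from by norm_num] at h
      have hall : ∀ m ∈ Fset, ‖bn m‖ ^ 2 = 0 := by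
        intro m hm
        have hm0 : (0:ℝ) < (m:ℝ) := by exact_mod_cast m.pos
        by_contra hne
        have hpos : 0 < ‖bn m‖ ^ 2 := lt_of_le_of_ne (by positivity) (Ne.symm hne)
        have hgt : 0 < ∑ m ∈ Fset, ‖bn m‖ ^ 2 * ((m:ℝ) ^ (-(1:ℝ))) ^ 2 := by
          apply Finset.sum_pos' (fun i _ => by positivity)
          refine ⟨m, hm, ?_⟩
          have : (0:ℝ) < (m:ℝ) ^ (-(1:ℝ)) := Real.rpow_pos_of_pos hm0 _
          positivity
        linarith
      rw [Finset.sum_congr rfl hall, Finset.sum_const_zero]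
      positivity
    · -- log n > 0
      have hlogn : 0 < Real.log n :=
        lt_of_le_of_ne (Real.log_nonneg hn1) (Ne.symm hn)
      have hsumσ : ∀ σ : ℝ, 0 < σ →
          Summable fun m : ℕ+ => ‖bn m * (m:ℂ) ^ (-(σ:ℂ))‖ := by
        intro σ hσ
        have hs : (0:ℝ) < ((σ:ℂ)).re := by simpa using hσ
        have heq := hb (σ:ℂ) hs
        have hne : -((Real.log n : ℂ) * (n : ℂ) ^ (-(Φ (σ:ℂ)))) ≠ 0 := by
          simp only [neg_ne_zero, mul_ne_zero_iff]
          refine ⟨?_, ?_⟩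
          · exact_mod_cast ne_of_gt hlogn
          · rw [Complex.cpow_def_of_ne_zero (pnat_cast_ne_zero n)]
            exact Complex.exp_ne_zero _
        by_contra hns
        have hns' : ¬ Summable (fun m : ℕ+ => bn m * (m:ℂ) ^ (-(σ:ℂ))) := by
          intro hs'
          exact hns (summable_norm_iff.mpr hs')
        rw [tsum_eq_zero_of_not_summable hns'] at heq
        exact hne heq
      have hclaim : ∀ σ : ℝ, 0 < σ →
          ∑ m ∈ Fset, ‖bn m‖ ^ 2 * ((m:ℝ) ^ (-σ)) ^ 2 ≤ (Real.log n * (n:ℝ) ^ (-ε)) ^ 2 :=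
        fun σ hσ => sigma_bound ε Φ hΦ n bn hb σ hσ (hsumσ σ hσ) Fset
      set g : ℝ → ℝ := fun σ => ∑ m ∈ Fset, ‖bn m‖ ^ 2 * ((m:ℝ) ^ (-σ)) ^ 2 with hg_def
      have hgc : Continuous g := by
        apply continuous_finset_sum
        intro m _
        have hm0 : (0:ℝ) < (m:ℝ) := by exact_mod_cast m.pos
        rw [show (fun σ : ℝ => ‖bn m‖ ^ 2 * ((m:ℝ) ^ (-σ)) ^ 2)
            = fun σ : ℝ => ‖bn m‖ ^ 2 * (Real.exp (Real.log m * (-σ))) ^ 2 by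
          funext σ; rw [Real.rpow_def_of_pos hm0]]
        fun_prop
      have hg0 : g 0 = ∑ m ∈ Fset, ‖bn m‖ ^ 2 := by
        rw [hg_def]
        refine Finset.sum_congr rfl (fun m _ => ?_)
        norm_num
      have htends : Filter.Tendsto g (nhdsWithin 0 (Set.Ioi 0)) (nhds (g 0)) :=
        (hgc.tendsto 0).mono_left nhdsWithin_le_nhds
      rw [← hg0]
      refine le_of_tendsto htends ?_
      filter_upwards [self_mem_nhdsWithin] with σ hσ
      exact hclaim σ hσ
  exact Summable.tsum_le_of_sum_le hb2 hfin

/-- Let `Φ` be holomorphic on `ℂ₀ = {Re s > 0}` with `Φ(ℂ₀) ⊂ ℂ_ε` for some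
`ε > 1/2`, inducing the operator `D_Φ f = f' ∘ Φ` on `ℋ²`.  For the
orthonormal basis `eₙ(s) = n^{-s}` of `ℋ²`, the image
`D_Φ(eₙ) = -(log n)·n^{-Φ(s)}` is a Dirichlet series `∑ₘ bₙ(m) m^{-s}` in
`ℋ²` (hypotheses `hb`, `hb2`).  Then `D_Φ` is Hilbert–Schmidt:
`∑ₙ ‖D_Φ(eₙ)‖²_{ℋ²} = ∑ₙ ∑ₘ |bₙ(m)|²` is finite; in particular it is at most
`∑ₙ (log n)²/n^{2ε} < ∞`. -/
theorem DPhi_hilbertSchmidt (ε : ℝ) (hε : 1 / 2 < ε) (Φ : ℂ → ℂ)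
    (hΦhol : DifferentiableOn ℂ Φ {s : ℂ | 0 < s.re})
    (hΦ : ∀ s : ℂ, 0 < s.re → ε < (Φ s).re)
    (b : ℕ+ → ℕ+ → ℂ)
    (hb : ∀ (n : ℕ+) (s : ℂ), 0 < s.re →
      -((Real.log n : ℂ) * (n : ℂ) ^ (-(Φ s))) =
        ∑' m : ℕ+, b n m * (m : ℂ) ^ (-s))
    (hb2 : ∀ n : ℕ+, Summable (fun m : ℕ+ => ‖b n m‖ ^ 2)) :
    Summable (fun n : ℕ+ => ∑' m : ℕ+, ‖b n m‖ ^ 2) ∧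
      ∑' n : ℕ+, (∑' m : ℕ+, ‖b n m‖ ^ 2) ≤
        ∑' n : ℕ+, (Real.log n) ^ 2 / (n : ℝ) ^ (2 * ε) ∧
      Summable (fun n : ℕ+ => (Real.log n) ^ 2 / (n : ℝ) ^ (2 * ε)) := by
  have hkey : ∀ n : ℕ+, ∑' m : ℕ+, ‖b n m‖ ^ 2 ≤ (Real.log n) ^ 2 / (n : ℝ) ^ (2 * ε) :=
    fun n => key_bound ε hε Φ hΦ n (b n) (hb n) (hb2 n)
  have hg := key_summable ε hε
  have h1 : Summable (fun n : ℕ+ => ∑' m : ℕ+, ‖b n m‖ ^ 2) :=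
    hg.of_nonneg_of_le (fun n => tsum_nonneg (fun m => by positivity)) hkey
  exact ⟨h1, Summable.tsum_le_tsum hkey h1 hg, hg⟩
end

section
/- The improper integral ∫_{-1}^{1} ∫_0^{ε} σ/(σ² + t²)² dσ dt diverges (equals +∞) for every ε > 0. -/
open MeasureTheory

lemma lintegral_inv_sq_Ioo_top {δ : ℝ} (hδ : 0 < δ) :
    ∫⁻ t in Set.Ioo (0 : ℝ) δ, ENNReal.ofReal (1 / (16 * t ^ 2)) = ⊤ := by
  by_contra h
  have hmeas : Measurable fun t : ℝ => 1 / (16 * t ^ 2) := by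
    measurability
  have hint : IntegrableOn (fun t : ℝ => 1 / (16 * t ^ 2)) (Set.Ioo 0 δ) := by
    refine ⟨hmeas.aestronglyMeasurable.restrict, ?_⟩
    rw [hasFiniteIntegral_iff_ofReal ?_]
    · exact Ne.lt_top h
    · filter_upwards with t
      positivity
  have hint' : IntegrableOn (fun t : ℝ => t ^ (-2 : ℝ)) (Set.Ioo 0 δ) := by
    refine IntegrableOn.congr_fun (hint.const_mul 16) ?_ measurableSet_Ioo
    intro x hx
    have hx0 : x ≠ 0 := ne_of_gt hx.1
    show (16:ℝ) * (1 / (16 * x ^ 2)) = x ^ (-2 : ℝ)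
    rw [show ((-2:ℝ)) = ((-2 : ℤ) : ℝ) by norm_num, Real.rpow_intCast]
    field_simp
  rw [intervalIntegral.integrableOn_Ioo_rpow_iff hδ] at hint'
  linarith

/-- For every `ε > 0`, the improper integral
`∫_{-1}^{1} ∫_0^{ε} σ/(σ² + t²)² dσ dt` diverges (equals `+∞`). -/
theorem integral_diverges (ε : ℝ) (hε : 0 < ε) :
    ∫⁻ t in Set.Ioo (-1 : ℝ) 1,
        ∫⁻ σ in Set.Ioo (0 : ℝ) ε,
          ENNReal.ofReal (σ / (σ ^ 2 + t ^ 2) ^ 2) = ⊤ := by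
  set δ := min ε 1 with hδdef
  have hδ : 0 < δ := lt_min hε one_pos
  have hsub : Set.Ioo (0 : ℝ) δ ⊆ Set.Ioo (-1 : ℝ) 1 := by
    intro x hx
    exact ⟨by linarith [hx.1], lt_of_lt_of_le hx.2 (min_le_right _ _)⟩
  rw [eq_top_iff]
  calc (⊤ : ENNReal) = ∫⁻ t in Set.Ioo (0 : ℝ) δ, ENNReal.ofReal (1 / (16 * t ^ 2)) :=
        (lintegral_inv_sq_Ioo_top hδ).symm
    _ ≤ ∫⁻ t in Set.Ioo (0 : ℝ) δ,
          ∫⁻ σ in Set.Ioo (0 : ℝ) ε, ENNReal.ofReal (σ / (σ ^ 2 + t ^ 2) ^ 2) := by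
        refine lintegral_mono_ae ?_
        filter_upwards [ae_restrict_mem measurableSet_Ioo] with t ht
        have ht0 : 0 < t := ht.1
        have htε : t < ε := lt_of_lt_of_le ht.2 (min_le_left _ _)
        calc ENNReal.ofReal (1 / (16 * t ^ 2))
            = ∫⁻ _ in Set.Ioo (t / 2) t, ENNReal.ofReal (1 / (8 * t ^ 3)) := by
              rw [setLIntegral_const, Real.volume_Ioo,
                ← ENNReal.ofReal_mul (by positivity)]
              congr 1
              field_simp
              ring
          _ ≤ ∫⁻ σ in Set.Ioo (t / 2) t, ENNReal.ofReal (σ / (σ ^ 2 + t ^ 2) ^ 2) := by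
              refine lintegral_mono_ae ?_
              filter_upwards [ae_restrict_mem measurableSet_Ioo] with σ hσ
              apply ENNReal.ofReal_le_ofReal
              have hσ0 : 0 < σ := lt_trans (by positivity) hσ.1
              have h1 : σ ^ 2 + t ^ 2 ≤ 2 * t ^ 2 := by nlinarith [hσ.2]
              have h2 : (σ ^ 2 + t ^ 2) ^ 2 ≤ 4 * t ^ 4 := by nlinarith [sq_nonneg σ]
              have h3 : (0:ℝ) < (σ ^ 2 + t ^ 2) ^ 2 := by positivity
              rw [div_le_div_iff₀ (by positivity) h3]
              nlinarith [hσ.1]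
          _ ≤ ∫⁻ σ in Set.Ioo (0 : ℝ) ε, ENNReal.ofReal (σ / (σ ^ 2 + t ^ 2) ^ 2) := by
              refine lintegral_mono_set ?_
              intro x hx
              exact ⟨lt_trans (by positivity) hx.1, lt_of_lt_of_le hx.2 htε.le⟩
    _ ≤ _ := lintegral_mono_set hsub
end
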